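/- Define h : [0,∞) → ℝ² by h(t) = (sin(eᵗ), cos(eᵗ)). Then h belongs to the class 𝒟 but not to the class 𝒜𝒟; that is, sup_{0 ≤ η ≤ 1} ‖∫_t^{t+η} h(s) ds‖₂ → 0 as t → ∞, while ∫_t^{t+1} ‖h(s)‖₂ ds = 1 for every t ≥ 0 and hence does not tend to 0. Consequently the inclusion 𝒜𝒟 ⊆ 𝒟 is strict. -/

import Mathlib

/-!
The oscillation of `h` speeds up exponentially: `eˢ h(s)` is the derivative of the unit-length
curve `k(s) = (-cos eˢ, sin eˢ)`, so integrating `h = e⁻ˢ • k'` by parts gives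
`‖∫_a^b h‖ ≤ 2 e⁻ᵃ` for all `a ≤ b`. The mass, however, does not decay, since `‖h(s)‖₂ = 1`.
-/

open Filter

/-- The function `h(t) = (sin(eᵗ), cos(eᵗ))` as a curve in Euclidean `ℝ²`. -/
noncomputable def hOsc : ℝ → EuclideanSpace ℝ (Fin 2) := fun t =>
  (WithLp.equiv 2 (Fin 2 → ℝ)).symm ![Real.sin (Real.exp t), Real.cos (Real.exp t)]

open Real intervalIntegral

theorem norm_integral_exp_neg_smul_deriv_le {E : Type*} [NormedAddCommGroup E] [NormedSpace ℝ E]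
    [CompleteSpace E] {k k' : ℝ → E} {C a b : ℝ} (hab : a ≤ b)
    (hk : ∀ x, HasDerivAt k (k' x) x)
    (hk' : IntervalIntegrable k' MeasureTheory.volume a b) (hC : ∀ x, ‖k x‖ ≤ C) :
    ‖∫ x in a..b, exp (-x) • k' x‖ ≤ 2 * C * exp (-a) := by
  have hexp : ∀ x, HasDerivAt (fun x => exp (-x)) (-exp (-x)) x := fun x => by
    simpa using (hasDerivAt_neg x).exp
  rw [integral_smul_deriv_eq_deriv_smul (fun x _ => hexp x) (fun x _ => hk x)
    ((by fun_prop : Continuous fun x => -exp (-x)).intervalIntegrable a b) hk']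
  have hrem : ‖∫ x in a..b, -exp (-x) • k x‖ ≤ C * (exp (-a) - exp (-b)) := by
    calc ‖∫ x in a..b, -exp (-x) • k x‖ ≤ ∫ x in a..b, C * exp (-x) := by
          refine norm_integral_le_of_norm_le hab (.of_forall fun x _ => ?_)
            ((by fun_prop : Continuous fun x => C * exp (-x)).intervalIntegrable a b)
          rw [norm_smul, norm_neg, norm_of_nonneg (exp_pos _).le, mul_comm]
          exact mul_le_mul_of_nonneg_right (hC x) (exp_pos _).le
      _ = C * (exp (-a) - exp (-b)) := by
          rw [integral_const_mul, integral_comp_neg, integral_exp]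
  have hend : ∀ x, ‖exp (-x) • k x‖ ≤ exp (-x) * C := fun x => by
    rw [norm_smul, norm_of_nonneg (exp_pos _).le]
    exact mul_le_mul_of_nonneg_left (hC x) (exp_pos _).le
  calc ‖exp (-b) • k b - exp (-a) • k a - ∫ x in a..b, -exp (-x) • k x‖
      ≤ ‖exp (-b) • k b‖ + ‖exp (-a) • k a‖ + ‖∫ x in a..b, -exp (-x) • k x‖ :=
          (norm_sub_le _ _).trans (add_le_add_left (norm_sub_le _ _) _)
    _ ≤ exp (-b) * C + exp (-a) * C + C * (exp (-a) - exp (-b)) :=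
          add_le_add (add_le_add (hend b) (hend a)) hrem
    _ = 2 * C * exp (-a) := by ring

theorem norm_hOsc (t : ℝ) : ‖hOsc t‖ = 1 := by
  simp [EuclideanSpace.norm_eq, hOsc, Fin.sum_univ_two]

@[fun_prop]
theorem continuous_hOsc : Continuous hOsc :=
  (PiLp.continuous_toLp 2 _).comp (by fun_prop)

noncomputable def hOscPrimitive (t : ℝ) : EuclideanSpace ℝ (Fin 2) :=
  (WithLp.equiv 2 (Fin 2 → ℝ)).symm ![-cos (exp t), sin (exp t)]

theorem norm_hOscPrimitive (t : ℝ) : ‖hOscPrimitive t‖ = 1 := by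
  simp [EuclideanSpace.norm_eq, hOscPrimitive, Fin.sum_univ_two]

theorem hasDerivAt_hOscPrimitive (t : ℝ) : HasDerivAt hOscPrimitive (exp t • hOsc t) t := by
  refine (EuclideanSpace.equiv (Fin 2) ℝ).symm.hasFDerivAt.comp_hasDerivAt t
    (hasDerivAt_pi.2 fun i => ?_)
  fin_cases i
  · simpa [hOsc, mul_comm] using (hasDerivAt_exp t).cos.fun_neg
  · simpa [hOsc, mul_comm] using (hasDerivAt_exp t).sin

theorem norm_integral_hOsc_le {a b : ℝ} (hab : a ≤ b) :
    ‖∫ s in a..b, hOsc s‖ ≤ 2 * exp (-a) := by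
  calc ‖∫ s in a..b, hOsc s‖ = ‖∫ s in a..b, exp (-s) • exp s • hOsc s‖ := by
        simp only [smul_smul, ← exp_add, neg_add_cancel, exp_zero, one_smul]
    _ ≤ 2 * 1 * exp (-a) := norm_integral_exp_neg_smul_deriv_le hab hasDerivAt_hOscPrimitive
      ((by fun_prop : Continuous fun s => exp s • hOsc s).intervalIntegrable a b)
      (fun s => (norm_hOscPrimitive s).le)
    _ = 2 * exp (-a) := by ring

/-- `h(t) = (sin(eᵗ), cos(eᵗ))` belongs to the class 𝒟 but not to
𝒜𝒟: the suprema `sup_{0 ≤ η ≤ 1} ‖∫_t^{t+η} h‖₂` tend to `0`, while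
`∫_t^{t+1} ‖h(s)‖₂ ds = 1` for all `t ≥ 0`, hence does not tend to `0`. -/
theorem stmt_7 :
    Tendsto (fun t : ℝ => ⨆ η ∈ Set.Icc (0:ℝ) 1, ‖∫ s in t..(t + η), hOsc s‖)
      atTop (nhds 0) ∧
    (∀ t : ℝ, 0 ≤ t → (∫ s in t..(t + 1), ‖hOsc s‖) = 1) ∧
    ¬ Tendsto (fun t : ℝ => ∫ s in t..(t + 1), ‖hOsc s‖) atTop (nhds 0) := by
  have hmass : ∀ t : ℝ, (∫ s in t..(t + 1), ‖hOsc s‖) = 1 := by simp [norm_hOsc]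
  refine ⟨?_, fun t _ => hmass t, fun h => ?_⟩
  · have hsup_le :
        ∀ t, (⨆ η ∈ Set.Icc (0:ℝ) 1, ‖∫ s in t..(t + η), hOsc s‖) ≤ 2 * exp (-t) :=
      fun t => Real.iSup_le (fun η => Real.iSup_le (fun hη => norm_integral_hOsc_le
        (le_add_of_nonneg_right hη.1)) (by positivity)) (by positivity)
    have hsup_nonneg :
        ∀ t, 0 ≤ ⨆ η ∈ Set.Icc (0:ℝ) 1, ‖∫ s in t..(t + η), hOsc s‖ :=
      fun t => Real.iSup_nonneg fun η => Real.iSup_nonneg fun _ => norm_nonneg _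
    exact squeeze_zero hsup_nonneg hsup_le
      (by simpa using tendsto_exp_neg_atTop_nhds_zero.const_mul 2)
  · simp only [hmass] at h
    exact one_ne_zero (tendsto_nhds_unique tendsto_const_nhds h)
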